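/- arXiv:1302.1932 — 5 statements merged into one kernel-verified Lean document; each statement's English description precedes it below -/
import Mathlib

section
/- For every n×n matrix M over a commutative ring R, the determinant of I + M equals the sum of the determinants of all principal submatrices of M; that is, det(1 + M) = ∑_{S ⊆ Fin n} det(M_S), where the sum ranges over all 2^n subsets S (including the empty set, whose principal minor is 1) and M_S denotes the principal submatrix of M with rows and columns indexed by S (in increasing order). -/
/-!
Expanding `det (M + 1)` by multilinearity in the rows gives one term for each set `S` of rows
taken from `M`, the remaining rows being those of the identity. That matrix is block upper
triangular with an identity block, so its determinant is the principal minor of `M` on `S`.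
-/

namespace Matrix

section

variable {ι R : Type*} [Fintype ι] [DecidableEq ι] [CommRing R]

theorem det_one_add_eq_sum_det_piecewise (M : Matrix ι ι R) :
    (1 + M).det = ∑ S : Finset ι, (of <| S.piecewise M.row (1 : Matrix ι ι R).row).det := by
  rw [add_comm]
  exact (detRowAlternating : (ι → R) [⋀^ι]→ₗ[R] R).map_add_univ M.row (1 : Matrix ι ι R).row

theorem det_one_add_eq_sum_det_submatrix (M : Matrix ι ι R) :
    (1 + M).det = ∑ S : Finset ι, (M.submatrix ((↑) : S → ι) (↑)).det := by
  simp only [det_one_add_eq_sum_det_piecewise, det_piecewise_one_eq_submatrix_det]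

end

theorem det_submatrix_orderEmbOfFin {ι R : Type*} [LinearOrder ι] [CommRing R]
    (M : Matrix ι ι R) (S : Finset ι) :
    (M.submatrix (S.orderEmbOfFin rfl) (S.orderEmbOfFin rfl)).det =
      (M.submatrix ((↑) : S → ι) (↑)).det :=
  det_submatrix_equiv_self (S.orderIsoOfFin rfl).toEquiv (M.submatrix ((↑) : S → ι) (↑))

end Matrix

/-- For every `n × n` matrix `M` over a commutative ring, `det (1 + M)` equals the sum of the
determinants of all principal submatrices of `M`, over all subsets `S` of `Fin n`. -/
theorem det_one_add_eq_sum_principal_minors {R : Type*} [CommRing R] {n : ℕ}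
    (M : Matrix (Fin n) (Fin n) R) :
    (1 + M).det =
      ∑ S : Finset (Fin n),
        (M.submatrix (S.orderEmbOfFin rfl) (S.orderEmbOfFin rfl)).det := by
  simp only [Matrix.det_submatrix_orderEmbOfFin, Matrix.det_one_add_eq_sum_det_submatrix]
end

section
/- Generalized Cauchy–Binet for fixed-size minors: let X be an a×b matrix and Y a b×c matrix over a commutative ring R. For any finsets I ⊆ Fin a and K ⊆ Fin c with |I| = |K| = r, det((X·Y)_{I,K}) = ∑_{J ⊆ Fin b, |J| = r} det(X_{I,J}) · det(Y_{J,K}), where the sum is over all r-element subsets J of Fin b. -/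
/-!
Expanding `det (A * B)` multilinearly in the columns writes it as a sum over all maps
`p : Fin r → n` of `det (A.submatrix id p) * ∏ i, B (p i) i`. Only injective `p` contribute, and
these are exactly the maps `J.orderEmbOfFin _ ∘ σ` with `J` an `r`-subset and `σ` a permutation;
summing over `σ` for fixed `J` produces `det A_J * det B_J`.
-/

open Matrix Finset Function Equiv

theorem Function.Injective.exists_perm_comp_eq_of_range_eq {α β : Type*} {f g : α → β}
    (hf : Injective f) (hg : Injective g) (h : Set.range f = Set.range g) :
    ∃ σ : Perm α, f ∘ σ = g :=
  ⟨(ofInjective g hg).trans ((setCongr h.symm).trans (ofInjective f hf).symm),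
    funext fun x => by simp [apply_ofInjective_symm]⟩

section OrderEmbOfFin

variable {n : Type*} [LinearOrder n] {r : ℕ}

theorem Finset.injective_orderEmbOfFin_comp_perm :
    Injective fun x : {J : Finset n // J.card = r} × Perm (Fin r) =>
      x.1.1.orderEmbOfFin x.1.2 ∘ x.2 := by
  rintro ⟨⟨J, hJ⟩, σ⟩ ⟨⟨J', hJ'⟩, σ'⟩ h
  obtain rfl : J = J' := by
    simpa [Set.range_comp, range_orderEmbOfFin] using congrArg Set.range h
  simpa using (J.orderEmbOfFin hJ).injective.comp_left h

theorem Finset.exists_orderEmbOfFin_comp_perm_eq {p : Fin r → n}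
    (hp : Injective p) :
    ∃ x : {J : Finset n // J.card = r} × Perm (Fin r), x.1.1.orderEmbOfFin x.1.2 ∘ x.2 = p := by
  have hcard : (univ.image p).card = r := by simp [card_image_of_injective _ hp]
  obtain ⟨σ, hσ⟩ := ((univ.image p).orderEmbOfFin hcard).injective
    |>.exists_perm_comp_eq_of_range_eq hp (by simp [range_orderEmbOfFin])
  exact ⟨(⟨_, hcard⟩, σ), hσ⟩

end OrderEmbOfFin

namespace Matrix

variable {R : Type*} [CommRing R] {m n : Type*} [Fintype m] [DecidableEq m]

theorem det_mul_eq_sum_det_submatrix_mul_prod [Fintype n] (A : Matrix m n R) (B : Matrix n m R) :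
    (A * B).det = ∑ p : m → n, (A.submatrix id p).det * ∏ i, B (p i) i := by
  calc (A * B).det
      = ∑ σ : Perm m, ∑ p : m → n, Perm.sign σ * ∏ i, A (σ i) (p i) * B (p i) i := by
        simp only [det_apply', mul_apply, prod_univ_sum, mul_sum, Fintype.piFinset_univ]
    _ = ∑ p : m → n, ∑ σ : Perm m, Perm.sign σ * ∏ i, A (σ i) (p i) * B (p i) i := sum_comm
    _ = ∑ p : m → n, (A.submatrix id p).det * ∏ i, B (p i) i := by
        simp only [det_apply', sum_mul, prod_mul_distrib, mul_assoc, submatrix_apply, id]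

theorem sum_perm_det_submatrix_comp_mul_prod (A : Matrix m n R) (B : Matrix n m R) (e : m → n) :
    ∑ σ : Perm m, (A.submatrix id (e ∘ σ)).det * ∏ i, B (e (σ i)) i =
      (A.submatrix id e).det * (B.submatrix e id).det := by
  rw [det_apply' (B.submatrix e id), mul_sum]
  refine sum_congr rfl fun σ _ => ?_
  rw [show A.submatrix id (e ∘ σ) = (A.submatrix id e).submatrix id σ from rfl, det_permute']
  simp only [submatrix_apply, id]
  ring

theorem det_mul_eq_sum_det_submatrix_mul_det_submatrix [Fintype n] [LinearOrder n] {r : ℕ}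
    (A : Matrix (Fin r) n R) (B : Matrix n (Fin r) R) :
    (A * B).det = ∑ J : {J : Finset n // J.card = r},
      (A.submatrix id (J.1.orderEmbOfFin J.2)).det *
        (B.submatrix (J.1.orderEmbOfFin J.2) id).det := by
  have hzero : ∀ p ∉ Set.range fun x : {J : Finset n // J.card = r} × Perm (Fin r) =>
      x.1.1.orderEmbOfFin x.1.2 ∘ x.2, (A.submatrix id p).det * ∏ i, B (p i) i = 0 := by
    intro p hp
    obtain ⟨i, j, hpij, hij⟩ :=
      not_injective_iff.1 fun hinj => hp (exists_orderEmbOfFin_comp_perm_eq hinj)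
    rw [det_zero_of_column_eq hij fun k => by simp [hpij], zero_mul]
  rw [det_mul_eq_sum_det_submatrix_mul_prod,
    ← Fintype.sum_of_injective _ injective_orderEmbOfFin_comp_perm _ _ hzero fun _ => rfl,
    Fintype.sum_prod_type]
  exact sum_congr rfl fun J _ => sum_perm_det_submatrix_comp_mul_prod A B (J.1.orderEmbOfFin J.2)

end Matrix

/-- Generalized Cauchy–Binet for fixed-size minors: for an `a × b` matrix `X` and a `b × c`
matrix `Y`, and index sets `I ⊆ Fin a`, `K ⊆ Fin c` with `|I| = |K| = r`,
`det ((X*Y)_{I,K}) = ∑_{J ⊆ Fin b, |J| = r} det (X_{I,J}) * det (Y_{J,K})`. -/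
theorem det_submatrix_mul_eq_sum_det_mul_det {R : Type*} [CommRing R] {a b c r : ℕ}
    (X : Matrix (Fin a) (Fin b) R) (Y : Matrix (Fin b) (Fin c) R)
    (I : Finset (Fin a)) (K : Finset (Fin c)) (hI : I.card = r) (hK : K.card = r) :
    ((X * Y).submatrix (I.orderEmbOfFin hI) (K.orderEmbOfFin hK)).det =
      ∑ J : {J : Finset (Fin b) // J.card = r},
        (X.submatrix (I.orderEmbOfFin hI) (J.1.orderEmbOfFin J.2)).det *
          (Y.submatrix (J.1.orderEmbOfFin J.2) (K.orderEmbOfFin hK)).det := by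
  rw [submatrix_mul _ _ _ id _ bijective_id, det_mul_eq_sum_det_submatrix_mul_det_submatrix]
  simp only [submatrix_submatrix, Function.comp_id, Function.id_comp]
end

section
/- Multiplicativity of the matrix of all minors: for an a×b matrix X over a commutative ring R, define the 'minor matrix' D(X), a matrix indexed by (Finset (Fin a)) × (Finset (Fin b)), by D(X)_{I,J} = det(X_{I,J}) if |I| = |J| and D(X)_{I,J} = 0 otherwise. Then for all X : Matrix (Fin a) (Fin b) R and Y : Matrix (Fin b) (Fin c) R, D(X·Y) = D(X)·D(Y) as matrices indexed by Finset (Fin a) × Finset (Fin c) (matrix product summing over all of Finset (Fin b)). -/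
open Finset Matrix Equiv

section Aux

variable {R : Type*} [CommRing R]

private lemma det_mul_eq_sum_fn {r b : ℕ} (A : Matrix (Fin r) (Fin b) R)
    (B : Matrix (Fin b) (Fin r) R) :
    det (A * B) = ∑ p : Fin r → Fin b, det (A.submatrix id p) * ∏ i, B (p i) i := by
  calc det (A * B)
      = ∑ σ : Equiv.Perm (Fin r), ((Equiv.Perm.sign σ : ℤ) : R)
          * ∏ i, ∑ k, A (σ i) k * B k i := by
        simp [det_apply', mul_apply]
    _ = ∑ σ : Equiv.Perm (Fin r), ∑ p : Fin r → Fin b,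
          ((Equiv.Perm.sign σ : ℤ) : R) * ∏ i, A (σ i) (p i) * B (p i) i := by
        simp only [Finset.prod_univ_sum, Fintype.piFinset_univ, Finset.mul_sum]
    _ = ∑ p : Fin r → Fin b, ∑ σ : Equiv.Perm (Fin r),
          ((Equiv.Perm.sign σ : ℤ) : R) * ∏ i, A (σ i) (p i) * B (p i) i :=
        Finset.sum_comm
    _ = ∑ p : Fin r → Fin b, det (A.submatrix id p) * ∏ i, B (p i) i := by
        refine Finset.sum_congr rfl fun p _ => ?_
        rw [det_apply', Finset.sum_mul]
        refine Finset.sum_congr rfl fun σ _ => ?_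
        rw [Finset.prod_mul_distrib, mul_assoc]
        rfl

private lemma det_submatrix_noninj {r b : ℕ} (A : Matrix (Fin r) (Fin b) R)
    {p : Fin r → Fin b} (hp : ¬ Function.Injective p) :
    det (A.submatrix id p) = 0 := by
  simp only [Function.Injective] at hp
  push_neg at hp
  obtain ⟨i, j, hpij, hij⟩ := hp
  exact det_zero_of_column_eq hij fun k => by simp [submatrix_apply, hpij]

private lemma cauchy_binet {r b : ℕ} (A : Matrix (Fin r) (Fin b) R)
    (B : Matrix (Fin b) (Fin r) R) :
    det (A * B) = ∑ K : Finset (Fin b),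
      (if h : K.card = r then
        det (A.submatrix id (K.orderEmbOfFin h)) * det (B.submatrix (K.orderEmbOfFin h) id)
      else 0) := by
  rw [det_mul_eq_sum_fn]
  rw [← Finset.sum_filter_add_sum_filter_not Finset.univ (fun p => Function.Injective p)]
  have h2 : ∑ p ∈ Finset.univ.filter (fun p : Fin r → Fin b => ¬ Function.Injective p),
      det (A.submatrix id p) * ∏ i, B (p i) i = 0 := by
    refine Finset.sum_eq_zero fun p hp => ?_
    rw [Finset.mem_filter] at hp
    rw [det_submatrix_noninj A hp.2, zero_mul]
  rw [h2, add_zero]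
  rw [← Finset.sum_fiberwise_of_maps_to (g := fun p : Fin r → Fin b => Finset.univ.image p)
    (fun p _ => Finset.mem_univ _)]
  refine Finset.sum_congr rfl fun K _ => ?_
  by_cases hK : K.card = r
  · rw [dif_pos hK]
    set e := K.orderEmbOfFin hK with he
    have himg : Finset.univ.image (⇑e) = K := by
      apply Finset.coe_injective
      rw [Finset.coe_image, Finset.coe_univ, Set.image_univ, Finset.range_orderEmbOfFin]
    have key : ∑ p ∈ (Finset.univ.filter (fun p : Fin r → Fin b => Function.Injective p)).filter
          (fun p => Finset.univ.image p = K),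
        det (A.submatrix id p) * ∏ i, B (p i) i
        = ∑ σ : Equiv.Perm (Fin r),
            det (A.submatrix id (⇑e ∘ ⇑σ)) * ∏ i, B (e (σ i)) i := by
      refine (Finset.sum_bij (fun (σ : Equiv.Perm (Fin r)) _ => ⇑e ∘ ⇑σ) ?_ ?_ ?_ ?_).symm
      · intro σ _
        simp only [Finset.mem_filter, Finset.mem_univ, true_and]
        refine ⟨e.injective.comp σ.injective, ?_⟩
        rw [← Finset.image_image, Finset.image_univ_equiv, himg]
      · intro σ _ τ _ hστ
        exact Equiv.ext fun i => e.injective (congrFun hστ i)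
      · intro p hp
        rw [Finset.mem_filter, Finset.mem_filter] at hp
        obtain ⟨⟨-, hinj⟩, himgp⟩ := hp
        have hpK : ∀ i, p i ∈ K := fun i => himgp ▸ Finset.mem_image_of_mem p (Finset.mem_univ i)
        set g : Fin r → Fin r := fun i => (K.orderIsoOfFin hK).symm ⟨p i, hpK i⟩ with hg
        have hginj : Function.Injective g := by
          intro i j hij
          have h2 : (⟨p i, hpK i⟩ : {x // x ∈ K}) = ⟨p j, hpK j⟩ := by
            simpa [hg] using congrArg (K.orderIsoOfFin hK) hij
          exact hinj (congrArg Subtype.val h2)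
        have hgbij : Function.Bijective g := Finite.injective_iff_bijective.mp hginj
        refine ⟨Equiv.ofBijective g hgbij, Finset.mem_univ _, ?_⟩
        funext i
        show e (g i) = p i
        rw [he, ← Finset.coe_orderIsoOfFin_apply, hg]
        simp
      · intro σ _
        rfl
    rw [key]
    have hperm : ∀ σ : Equiv.Perm (Fin r),
        det (A.submatrix id (⇑e ∘ ⇑σ)) = Equiv.Perm.sign σ * det (A.submatrix id ⇑e) := by
      intro σ
      rw [show A.submatrix id (⇑e ∘ ⇑σ) = (A.submatrix id ⇑e).submatrix id ⇑σ from
        (Matrix.submatrix_submatrix ..).symm ▸ rfl]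
      exact det_permute' σ _
    calc ∑ σ : Equiv.Perm (Fin r), det (A.submatrix id (⇑e ∘ ⇑σ)) * ∏ i, B (e (σ i)) i
        = det (A.submatrix id ⇑e) * ∑ σ : Equiv.Perm (Fin r),
            ((Equiv.Perm.sign σ : ℤ) : R) * ∏ i, (B.submatrix ⇑e id) (σ i) i := by
          rw [Finset.mul_sum]
          refine Finset.sum_congr rfl fun σ _ => ?_
          rw [hperm σ]
          simp only [Matrix.submatrix_apply, id_eq]
          ring
    _ = det (A.submatrix id ⇑e) * det (B.submatrix ⇑e id) := by rw [← det_apply']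
  · rw [dif_neg hK]
    refine Finset.sum_eq_zero fun p hp => ?_
    rw [Finset.mem_filter, Finset.mem_filter] at hp
    obtain ⟨⟨-, hinj⟩, himgp⟩ := hp
    exact absurd (by rw [← himgp, Finset.card_image_of_injective _ hinj, Finset.card_univ,
      Fintype.card_fin]) hK

private lemma orderEmbOfFin_cast {α : Type*} [LinearOrder α] (s : Finset α) {m n : ℕ}
    (h1 : s.card = m) (h2 : s.card = n) (e : n = m) (i : Fin n) :
    s.orderEmbOfFin h1 (Fin.cast e i) = s.orderEmbOfFin h2 i := by
  have : (fun j : Fin n => s.orderEmbOfFin h1 (Fin.cast e j)) = ⇑(s.orderEmbOfFin h2) :=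
    Finset.orderEmbOfFin_unique h2 (fun x => Finset.orderEmbOfFin_mem ..)
      ((s.orderEmbOfFin h1).strictMono.comp fun a b hab => hab)
  exact congrFun this i

end Aux

/-- The matrix of all minors of a matrix `X`: indexed by pairs of finsets of row and column
indices, with entry `det (X_{I,J})` when `|I| = |J|` and `0` otherwise. -/
noncomputable def minorMatrix {R : Type*} [CommRing R] {a b : ℕ}
    (X : Matrix (Fin a) (Fin b) R) : Matrix (Finset (Fin a)) (Finset (Fin b)) R :=
  Matrix.of fun I J =>
    if h : I.card = J.card then
      (X.submatrix (I.orderEmbOfFin rfl) (J.orderEmbOfFin h.symm)).det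
    else 0

/-- Multiplicativity of the matrix of all minors: `D(X·Y) = D(X)·D(Y)`. -/
theorem minorMatrix_mul {R : Type*} [CommRing R] {a b c : ℕ}
    (X : Matrix (Fin a) (Fin b) R) (Y : Matrix (Fin b) (Fin c) R) :
    minorMatrix (X * Y) = minorMatrix X * minorMatrix Y := by
  ext I J
  rw [Matrix.mul_apply]
  by_cases h : I.card = J.card
  · have hsub : (X * Y).submatrix (⇑(I.orderEmbOfFin rfl)) (⇑(J.orderEmbOfFin h.symm))
        = (X.submatrix (⇑(I.orderEmbOfFin rfl)) id) * (Y.submatrix id (⇑(J.orderEmbOfFin h.symm))) := by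
      ext i j
      simp [Matrix.mul_apply]
    have lhs : minorMatrix (X * Y) I J
        = det ((X.submatrix (I.orderEmbOfFin rfl) id) * (Y.submatrix id (J.orderEmbOfFin h.symm))) := by
      rw [minorMatrix, Matrix.of_apply, dif_pos h, hsub]
    rw [lhs, cauchy_binet]
    refine Finset.sum_congr rfl fun K _ => ?_
    by_cases hK : K.card = I.card
    · rw [dif_pos hK, minorMatrix, minorMatrix, Matrix.of_apply, Matrix.of_apply,
        dif_pos hK.symm, dif_pos (hK.trans h)]
      have f1 : det ((X.submatrix (⇑(I.orderEmbOfFin rfl)) id).submatrix id ⇑(K.orderEmbOfFin hK))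
          = det (X.submatrix (⇑(I.orderEmbOfFin rfl)) ⇑(K.orderEmbOfFin hK.symm.symm)) := by
        congr 1
      have f2 : det ((Y.submatrix id ⇑(J.orderEmbOfFin h.symm)).submatrix ⇑(K.orderEmbOfFin hK) id)
          = det (Y.submatrix ⇑(K.orderEmbOfFin rfl) ⇑(J.orderEmbOfFin (hK.trans h).symm)) := by
        rw [← Matrix.det_submatrix_equiv_self (finCongr hK.symm)
          (Y.submatrix ⇑(K.orderEmbOfFin rfl) ⇑(J.orderEmbOfFin (hK.trans h).symm))]
        congr 1
      rw [f1, f2]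
    · rw [dif_neg hK, minorMatrix, Matrix.of_apply, dif_neg (fun hh => hK hh.symm), zero_mul]
  · rw [show minorMatrix (X * Y) I J = 0 from dif_neg h]
    refine (Finset.sum_eq_zero fun K _ => ?_).symm
    by_cases hIK : I.card = K.card
    · rw [show minorMatrix Y K J = 0 from dif_neg (fun hh => h (hIK.trans hh)), mul_zero]
    · rw [show minorMatrix X I K = 0 from dif_neg hIK, zero_mul]
end

section
/- The Pfaffian is invariant under anti-transposition: let N be a skew-symmetric 2n×2n matrix over ℂ (Nᵀ = −N), and let N̂ be its anti-transpose, the matrix obtained by reflecting N across its anti-diagonal, i.e., N̂_{i,j} = N_{2n−1−j, 2n−1−i} for i, j ∈ Fin 2n (0-indexed). Then pf(N̂) = pf(N). -/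
open Matrix

/-- The Pfaffian of a `2n × 2n` matrix over `ℂ`, given by the averaged sum over all
permutations: `pf A = (1 / (2^n n!)) ∑_σ sign σ ∏_i A (σ (2i)) (σ (2i+1))`. -/
noncomputable def pf {n : ℕ} (A : Matrix (Fin (2 * n)) (Fin (2 * n)) ℂ) : ℂ :=
  (1 / (2 ^ n * (n.factorial : ℂ))) *
    ∑ σ : Equiv.Perm (Fin (2 * n)),
      ((Equiv.Perm.sign σ : ℤ) : ℂ) *
        ∏ i : Fin n,
          A (σ ⟨2 * i.val, by have := i.isLt; omega⟩)
            (σ ⟨2 * i.val + 1, by have := i.isLt; omega⟩)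

/-- The anti-transpose of a matrix: reflection across the anti-diagonal,
`N̂ i j = N (rev j) (rev i)`. -/
def antiTranspose {m : ℕ} (N : Matrix (Fin m) (Fin m) ℂ) : Matrix (Fin m) (Fin m) ℂ :=
  Matrix.of fun i j => N j.rev i.rev

/-- The Pfaffian of a skew-symmetric matrix is invariant under anti-transposition. -/
theorem pf_antiTranspose {n : ℕ} (N : Matrix (Fin (2 * n)) (Fin (2 * n)) ℂ)
    (hN : Nᵀ = -N) : pf (antiTranspose N) = pf N := by
  unfold pf
  congr 1
  set R : Equiv.Perm (Fin (2 * n)) := Fin.revPerm with hR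
  refine Fintype.sum_equiv
    ((Equiv.mulLeft R).trans (Equiv.mulRight R)) _ _ fun σ => ?_
  have hsign : Equiv.Perm.sign (R * σ * R) = Equiv.Perm.sign σ := by
    rw [_root_.map_mul, _root_.map_mul, mul_comm, ← mul_assoc, Int.units_mul_self, one_mul]
  simp only [Equiv.trans_apply, Equiv.coe_mulLeft, Equiv.coe_mulRight, hsign]
  congr 1
  refine Fintype.prod_equiv (Fin.revPerm : Equiv.Perm (Fin n)) _ _ fun i => ?_
  have h1 : (Fin.rev ⟨2 * (Fin.rev i).val, by have := (Fin.rev i).isLt; omega⟩ :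
      Fin (2 * n)) = ⟨2 * i.val + 1, by have := i.isLt; omega⟩ := by
    ext
    simp only [Fin.val_rev]
    omega
  have h2 : (Fin.rev ⟨2 * (Fin.rev i).val + 1, by have := (Fin.rev i).isLt; omega⟩ :
      Fin (2 * n)) = ⟨2 * i.val, by have := i.isLt; omega⟩ := by
    ext
    simp only [Fin.val_rev]
    omega
  simp only [Fin.revPerm_apply, Equiv.Perm.mul_apply, hR, h1, h2,
    antiTranspose, Matrix.of_apply]
end

section
/- Sub-Pfaffians of S(M) compute arbitrary minors of M: let M be an n×n matrix over ℂ, M̃ = M with its columns reversed, and S(M) = [[0, M̃], [−M̃ᵀ, 0]] the skew-symmetric matrix indexed by Fin n ⊕ Fin n. For any finsets I, J ⊆ Fin n with |I| = |J| = r, consider the principal submatrix of S(M) on the index set (inl '' I) ∪ (inr '' J̃), where J̃ = {n−1−j : j ∈ J}, with indices ordered as the elements of I in increasing order followed by the elements of J̃ in increasing order. The Pfaffian of this 2r×2r principal submatrix equals det(M_{I,J}), the determinant of the submatrix of M with rows I and columns J each taken in increasing order. -/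
/-!
Relabel rows and columns so that the row index `inl i` is paired with the column index `inr i`.
The relabelling `k ↦ 2k` (`k < r`), `r + j ↦ 2r - 1 - 2j`, which turns the block order `I, J̃`
into the interleaved order of the pairs `(2i, 2i + 1)` in `pf`, has sign `1`: reversing `J`
exactly compensates the sign `(-1)^(r(r-1)/2)` of the riffle shuffle. For the skew block matrix
`[[0, N], [-Nᵀ, 0]]` a permutation contributes only if it sends every pair `{inl x, inr x}` to one
row and one column index. These permutations are `sumCongr α β` composed with swaps inside some
pairs; the swaps do not change the term, so the sum is `2^r · r! · det N`, cancelling the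
normalisation of `pf`.
-/

open Matrix

open Equiv Equiv.Perm

theorem Int.cast_units_mul_self {R : Type*} [Ring R] (u : ℤˣ) : ((u : ℤ) : R) * u = 1 := by
  rw [← Int.cast_mul, Int.units_coe_mul_self, Int.cast_one]

section PairedSum

variable {X R : Type*}

def pairSwap (s : X → Bool) : Perm (X ⊕ X) :=
  (boolProdEquivSum X).permCongr (prodCongrLeft fun x => if s x then swap false true else 1)

theorem pairSwap_inl (s : X → Bool) (x : X) :
    pairSwap s (.inl x) = if s x then .inr x else .inl x := by
  cases h : s x <;> simp [pairSwap, h]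

theorem pairSwap_inr (s : X → Bool) (x : X) :
    pairSwap s (.inr x) = if s x then .inl x else .inr x := by
  cases h : s x <;> simp [pairSwap, h]

theorem pairSwap_mul_self (s : X → Bool) : pairSwap s * pairSwap s = 1 := by
  ext (x | x) <;> cases h : s x <;> simp [pairSwap_inl, pairSwap_inr, h]

theorem sumCongr_mul_pairSwap_inl (α β : Perm X) (s : X → Bool) (x : X) :
    (Perm.sumCongr α β * pairSwap s) (.inl x) = if s x then .inr (β x) else .inl (α x) := by
  rw [Perm.coe_mul, Function.comp_apply, pairSwap_inl]
  split <;> simp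

theorem sumCongr_mul_pairSwap_injective :
    Function.Injective fun p : Perm X × Perm X × (X → Bool) =>
      Perm.sumCongr p.1 p.2.1 * pairSwap p.2.2 := by
  rintro ⟨α, β, s⟩ ⟨α', β', s'⟩ h
  have hs : s = s' := funext fun x => by
    have hx := congrArg (fun σ : Perm (X ⊕ X) => (σ (.inl x)).isRight) h
    simp only [sumCongr_mul_pairSwap_inl] at hx
    cases hsx : s x <;> cases hsx' : s' x <;> simp [hsx, hsx'] at hx ⊢
  subst hs
  have h' : sumCongrHom X X (α, β) * pairSwap s = sumCongrHom X X (α', β') * pairSwap s := h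
  have hαβ := sumCongrHom_injective (mul_right_cancel h')
  simp_all

theorem fromBlocks_zero_zero_apply_eq_zero [Zero R] (B C : Matrix X X R) {u v : X ⊕ X}
    (h : u.isLeft = v.isLeft) : fromBlocks 0 B C 0 u v = 0 := by
  rcases u with u | u <;> rcases v with v | v <;> simp_all

variable [Fintype X] [DecidableEq X] [CommRing R]

theorem sign_pairSwap (s : X → Bool) : sign (pairSwap s) = ∏ x, if s x then -1 else 1 := by
  rw [pairSwap, sign_permCongr, sign_prodCongrLeft]
  refine Fintype.prod_congr _ _ fun x => ?_
  split <;> simp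

def pfTerm (A : Matrix (X ⊕ X) (X ⊕ X) R) (σ : Perm (X ⊕ X)) : R :=
  sign σ * ∏ x, A (σ (.inl x)) (σ (.inr x))

theorem pfTerm_mul_pairSwap {A : Matrix (X ⊕ X) (X ⊕ X) R} (hA : Aᵀ = -A)
    (σ : Perm (X ⊕ X)) (s : X → Bool) : pfTerm A (σ * pairSwap s) = pfTerm A σ := by
  have hpair : ∀ x, A (σ (pairSwap s (.inl x))) (σ (pairSwap s (.inr x))) =
      (if s x then -1 else 1) * A (σ (.inl x)) (σ (.inr x)) := by
    intro x
    rw [pairSwap_inl, pairSwap_inr]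
    split
    · rw [neg_one_mul, ← Matrix.neg_apply, ← hA, transpose_apply]
    · rw [one_mul]
  set ε : X → R := fun x => if s x then -1 else 1
  have hsign : ((sign (pairSwap s) : ℤ) : R) = ∏ x, ε x := by
    rw [sign_pairSwap]
    push_cast
    exact Fintype.prod_congr _ _ fun x => by split <;> simp [ε, *]
  have hε : (∏ x, ε x) * ∏ x, ε x = 1 := by
    rw [← Finset.prod_mul_distrib]
    exact Fintype.prod_eq_one _ fun x => by simp only [ε]; split <;> simp
  simp only [pfTerm, Perm.coe_mul, Function.comp_apply, hpair, map_mul, Units.val_mul,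
    Int.cast_mul, hsign, Finset.prod_mul_distrib]
  linear_combination (sign σ * ∏ x, A (σ (.inl x)) (σ (.inr x))) * hε

theorem pfTerm_fromBlocks_sumCongr (B : Matrix X X R) (α β : Perm X) :
    pfTerm (fromBlocks 0 B (-Bᵀ) 0) (Perm.sumCongr α β) =
      sign α * sign β * ∏ x, B (α x) (β x) := by
  simp [pfTerm, sign_sumCongr]

theorem exists_sumCongr_mul_pairSwap_eq {B C : Matrix X X R} {σ : Perm (X ⊕ X)}
    (h : pfTerm (fromBlocks 0 B C 0) σ ≠ 0) :
    ∃ p : Perm X × Perm X × (X → Bool), Perm.sumCongr p.1 p.2.1 * pairSwap p.2.2 = σ := by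
  have hmixed : ∀ x, (σ (.inl x)).isLeft ≠ (σ (.inr x)).isLeft := fun x hx =>
    h (mul_eq_zero_of_right _ (Finset.prod_eq_zero (Finset.mem_univ x)
      (fromBlocks_zero_zero_apply_eq_zero B C hx)))
  set s : X → Bool := fun x => (σ (.inl x)).isRight
  have hmaps : Set.MapsTo (σ * pairSwap s) (Set.range .inl) (Set.range .inl) := by
    rintro _ ⟨x, rfl⟩
    have hx := hmixed x
    have hleft : ((σ * pairSwap s) (.inl x)).isLeft := by
      rw [Perm.coe_mul, Function.comp_apply, pairSwap_inl]
      rcases hσ : σ (.inl x) with y | y <;> rw [hσ] at hx <;> simp_all [s]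
    obtain ⟨y, hy⟩ := Sum.isLeft_iff.mp hleft
    exact ⟨y, hy.symm⟩
  obtain ⟨⟨α, β⟩, hαβ⟩ := mem_sumCongrHom_range_of_perm_mapsTo_inl hmaps
  refine ⟨(α, β, s), ?_⟩
  simpa [mul_assoc, pairSwap_mul_self] using congrArg (· * pairSwap s) hαβ

theorem sum_sign_mul_sign_mul_prod (B : Matrix X X R) :
    ∑ α : Perm X, ∑ β : Perm X, (sign α * sign β * ∏ x, B (α x) (β x) : R) =
      (Fintype.card X).factorial * B.det := by
  have hβ (β : Perm X) :
      ∑ α : Perm X, (sign α * sign β * ∏ x, B (α x) (β x) : R) = B.det := by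
    rw [det_apply']
    refine (Fintype.sum_equiv (Equiv.mulRight β) _ _ fun γ => ?_).symm
    simp only [coe_mulRight, Perm.coe_mul, Function.comp_apply, map_mul, Units.val_mul,
      Int.cast_mul, Equiv.prod_comp β fun i => B (γ i) i]
    linear_combination (-(sign γ : R) * ∏ i, B (γ i) i) *
      Int.cast_units_mul_self (R := R) (sign β)
  rw [Finset.sum_comm, Fintype.sum_congr _ _ hβ, Finset.sum_const, Finset.card_univ,
    Fintype.card_perm, nsmul_eq_mul]

theorem sum_pfTerm_fromBlocks (B : Matrix X X R) :
    ∑ σ, pfTerm (fromBlocks 0 B (-Bᵀ) 0) σ =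
      2 ^ Fintype.card X * (Fintype.card X).factorial * B.det := by
  have hskew : (fromBlocks 0 B (-Bᵀ) 0)ᵀ = -fromBlocks 0 B (-Bᵀ) 0 := by
    simp [fromBlocks_transpose, fromBlocks_neg]
  calc ∑ σ, pfTerm (fromBlocks 0 B (-Bᵀ) 0) σ
      = ∑ p : Perm X × Perm X × (X → Bool),
          pfTerm (fromBlocks 0 B (-Bᵀ) 0) (Perm.sumCongr p.1 p.2.1 * pairSwap p.2.2) := by
        refine (Finset.sum_of_injOn _ sumCongr_mul_pairSwap_injective.injOn (by simp)
          (fun σ _ hσ => ?_) (by simp)).symm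
        by_contra h
        obtain ⟨p, hp⟩ := exists_sumCongr_mul_pairSwap_eq h
        exact hσ ⟨p, by simp, hp⟩
    _ = ∑ α : Perm X, ∑ β : Perm X, ∑ _s : X → Bool,
          (sign α * sign β * ∏ x, B (α x) (β x) : R) := by
        simp only [Fintype.sum_prod_type, pfTerm_mul_pairSwap hskew, pfTerm_fromBlocks_sumCongr]
    _ = 2 ^ Fintype.card X * (Fintype.card X).factorial * B.det := by
        simp only [Finset.sum_const, Finset.card_univ, Fintype.card_fun, Fintype.card_bool,
          nsmul_eq_mul, ← Finset.mul_sum, sum_sign_mul_sign_mul_prod]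
        push_cast
        ring

end PairedSum

def finSumFinInterleave (r : ℕ) : Fin r ⊕ Fin r ≃ Fin (2 * r) where
  toFun := Sum.elim (fun i => ⟨2 * i, by omega⟩) (fun i => ⟨2 * i + 1, by omega⟩)
  invFun k := if (k : ℕ) % 2 = 0 then .inl ⟨k / 2, by omega⟩ else .inr ⟨k / 2, by omega⟩
  left_inv := by rintro (i | i) <;> simp [Nat.mul_add_div]
  right_inv k := Fin.ext <| by
    dsimp only
    split <;> simp only [Sum.elim_inl, Sum.elim_inr] <;> omega

theorem pf_submatrix_perm {n : ℕ} (A : Matrix (Fin (2 * n)) (Fin (2 * n)) ℂ)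
    (σ : Perm (Fin (2 * n))) : pf (A.submatrix σ σ) = sign σ * pf A := by
  unfold pf
  rw [mul_left_comm]
  congr 1
  rw [Finset.mul_sum]
  refine Fintype.sum_equiv (Equiv.mulLeft σ) _ _ fun τ => ?_
  simp only [coe_mulLeft, Perm.coe_mul, Function.comp_apply, map_mul, Units.val_mul, Int.cast_mul,
    submatrix_apply]
  rw [← mul_assoc, ← mul_assoc, Int.cast_units_mul_self, one_mul]

theorem pf_submatrix_finSumFinInterleave_symm {r : ℕ}
    (A : Matrix (Fin r ⊕ Fin r) (Fin r ⊕ Fin r) ℂ) :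
    pf (A.submatrix (finSumFinInterleave r).symm (finSumFinInterleave r).symm) =
      (2 ^ r * r.factorial : ℂ)⁻¹ * ∑ σ, pfTerm A σ := by
  unfold pf
  rw [one_div]
  congr 1
  refine Fintype.sum_equiv (finSumFinInterleave r).symm.permCongr _ _ fun σ => ?_
  rw [pfTerm, sign_permCongr]
  rfl

def finFoldPerm (r : ℕ) : Perm (Fin (2 * r)) :=
  ((finCongr (two_mul r)).trans (finSumFinEquiv.symm.trans
    (Equiv.sumCongr (Equiv.refl _) Fin.revPerm))).trans (finSumFinInterleave r)

theorem val_finFoldPerm {r : ℕ} (k : Fin (2 * r)) :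
    (finFoldPerm r k : ℕ) = if (k : ℕ) < r then 2 * (k : ℕ) else 4 * r - 1 - 2 * k := by
  rcases lt_or_ge (k : ℕ) r with hk | hk
  · have : finSumFinEquiv.symm (Fin.cast (two_mul r) k) = .inl ⟨k, hk⟩ := by
      rw [Equiv.symm_apply_eq]; rfl
    simp [finFoldPerm, this, finSumFinInterleave, hk]
  · have : finSumFinEquiv.symm (Fin.cast (two_mul r) k) = .inr ⟨k - r, by omega⟩ := by
      rw [Equiv.symm_apply_eq]; ext; simp; omega
    simp only [finFoldPerm, finSumFinInterleave, trans_apply, finCongr_apply, this,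
      Equiv.sumCongr_apply, Sum.map_inr, Fin.revPerm_apply, coe_fn_mk, Sum.elim_inr, Fin.val_rev,
      if_neg (show ¬(k : ℕ) < r by omega)]
    omega

def finSuccShiftEmb (r : ℕ) : Fin (2 * r) ↪ Fin (2 * (r + 1)) :=
  ⟨fun k => ⟨k + 1, by omega⟩, fun a b h => by simpa [Fin.ext_iff] using h⟩

theorem val_finSuccShiftEmb {r : ℕ} (k : Fin (2 * r)) : (finSuccShiftEmb r k : ℕ) = k + 1 := rfl

theorem finFoldPerm_succ (r : ℕ) :
    finFoldPerm (r + 1) = Fin.cycleIcc ⟨1, by omega⟩ ⟨2 * r + 1, by omega⟩ *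
      (finFoldPerm r).viaFintypeEmbedding (finSuccShiftEmb r) := by
  ext k
  rw [Perm.mul_apply]
  by_cases hk : k ∈ Set.range (finSuccShiftEmb r)
  · obtain ⟨j, rfl⟩ := hk
    have hj := j.isLt
    have hρ := (finFoldPerm r j).isLt
    rw [viaFintypeEmbedding_apply_image, Fin.cycleIcc_of_ge_of_lt, Fin.val_add_one_of_lt',
      val_finSuccShiftEmb, val_finFoldPerm, val_finFoldPerm, val_finSuccShiftEmb]
    · split_ifs <;> omega
    all_goals simp only [Fin.le_def, Fin.lt_def, val_finSuccShiftEmb]; omega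
  · rw [viaFintypeEmbedding_apply_notMem_range _ _ hk]
    have hk' : (k : ℕ) = 0 ∨ (k : ℕ) = 2 * r + 1 := by
      by_contra h
      exact hk ⟨⟨k - 1, by omega⟩, Fin.ext (by rw [val_finSuccShiftEmb, Fin.val_mk]; omega)⟩
    rcases hk' with hk' | hk'
    · rw [Fin.cycleIcc_of_lt (Fin.lt_def.mpr (by show (k : ℕ) < 1; omega)), val_finFoldPerm]
      simp [hk']
    · rw [show k = ⟨2 * r + 1, by omega⟩ from Fin.ext hk',
        Fin.cycleIcc_of_last (Fin.le_def.mpr (by show 1 ≤ 2 * r + 1; omega)), val_finFoldPerm]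
      simp only [if_neg (show ¬2 * r + 1 < r + 1 by omega)]
      omega

theorem sign_finFoldPerm (r : ℕ) : sign (finFoldPerm r) = 1 := by
  induction r with
  | zero =>
    rw [show finFoldPerm 0 = 1 from Equiv.ext fun k => absurd k.isLt (by simp), Perm.sign_one]
  | succ r ih =>
    rw [finFoldPerm_succ, map_mul, Fin.sign_cycleIcc_of_le (by simp [Fin.le_def]),
      viaFintypeEmbedding, sign_extendDomain, ih]
    simp

theorem finSumFinInterleave_symm_finFoldPerm {r : ℕ} (k : Fin (2 * r)) :
    (finSumFinInterleave r).symm (finFoldPerm r k) =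
      Sum.map id Fin.rev (finSumFinEquiv.symm (Fin.cast (two_mul r) k)) := by
  rw [finFoldPerm, trans_apply, symm_apply_apply]
  rfl

theorem Finset.orderEmbOfFin_image_rev {n r : ℕ} (J : Finset (Fin n)) (hJ : J.card = r)
    (h : (J.image Fin.rev).card = r) (b : Fin r) :
    (J.image Fin.rev).orderEmbOfFin h b = (J.orderEmbOfFin hJ b.rev).rev := by
  have hmono : StrictMono fun b : Fin r => (J.orderEmbOfFin hJ b.rev).rev := fun a b hab => by
    simpa [Fin.rev_lt_rev] using (J.orderEmbOfFin hJ).strictMono (Fin.rev_lt_rev.mpr hab)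
  have hmem : ∀ b : Fin r, (J.orderEmbOfFin hJ b.rev).rev ∈ J.image Fin.rev :=
    fun b => Finset.mem_image_of_mem Fin.rev (J.orderEmbOfFin_mem hJ b.rev)
  exact congrFun (Finset.orderEmbOfFin_unique h hmem hmono).symm b

theorem fromBlocks_submatrix_sumMap_rev {R m : Type*} [Ring R] {n r : ℕ}
    (M : Matrix m (Fin n) R) (f : Fin r → m) {g h : Fin r → Fin n}
    (hgh : ∀ b, g b = (h b.rev).rev) :
    (fromBlocks 0 (M.submatrix id Fin.rev) (-(M.submatrix id Fin.rev)ᵀ) 0).submatrix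
        (Sum.map f g) (Sum.map f g) =
      (fromBlocks 0 (M.submatrix f h) (-(M.submatrix f h)ᵀ) 0).submatrix
        (Sum.map id Fin.rev) (Sum.map id Fin.rev) := by
  ext (a | b) (a' | b') <;> simp [hgh]

/-- Sub-Pfaffians of `S(M) = [[0, M̃], [-M̃ᵀ, 0]]` compute arbitrary minors of `M`: for finsets
`I, J ⊆ Fin n` with `|I| = |J| = r`, the Pfaffian of the principal submatrix of `S(M)` on
`(inl '' I) ∪ (inr '' J̃)` (with `J̃` the reversed image of `J`, indices ordered as `I`
increasing followed by `J̃` increasing) equals `det (M_{I,J})`. -/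
theorem pf_submatrix_fromBlocks_eq_det_minor {n r : ℕ} (M : Matrix (Fin n) (Fin n) ℂ)
    (I J : Finset (Fin n)) (hI : I.card = r) (hJ : J.card = r) :
    pf ((Matrix.fromBlocks 0 (M.submatrix id Fin.rev) (-(M.submatrix id Fin.rev)ᵀ) 0).submatrix
        (fun i : Fin (2 * r) =>
          Sum.map (I.orderEmbOfFin hI)
            ((J.image Fin.rev).orderEmbOfFin
              ((Finset.card_image_of_injective J Fin.rev_injective).trans hJ))
            (finSumFinEquiv.symm (Fin.cast (by omega : 2 * r = r + r) i)))
        (fun i : Fin (2 * r) =>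
          Sum.map (I.orderEmbOfFin hI)
            ((J.image Fin.rev).orderEmbOfFin
              ((Finset.card_image_of_injective J Fin.rev_injective).trans hJ))
            (finSumFinEquiv.symm (Fin.cast (by omega : 2 * r = r + r) i)))) =
      (M.submatrix (I.orderEmbOfFin hI) (J.orderEmbOfFin hJ)).det := by
  set N := M.submatrix (I.orderEmbOfFin hI) (J.orderEmbOfFin hJ)
  have hN : pf (((fromBlocks 0 N (-Nᵀ) 0).submatrix (finSumFinInterleave r).symm
      (finSumFinInterleave r).symm).submatrix (finFoldPerm r) (finFoldPerm r)) = N.det := by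
    rw [pf_submatrix_perm, sign_finFoldPerm, pf_submatrix_finSumFinInterleave_symm,
      sum_pfTerm_fromBlocks, Fintype.card_fin, Units.val_one, Int.cast_one, one_mul,
      inv_mul_cancel_left₀ (by simp [Nat.factorial_ne_zero])]
  rw [← hN, submatrix_submatrix]
  congr 1
  ext k l
  simp only [submatrix_apply, Function.comp_apply, finSumFinInterleave_symm_finFoldPerm]
  exact congrFun₂ (fromBlocks_submatrix_sumMap_rev M _ (J.orderEmbOfFin_image_rev hJ _)) _ _
end
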